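/- arXiv:1105.3925 — 4 statements merged into one kernel-verified Lean document; each statement's English description precedes it below -/
import Mathlib

section
/- A geodesic metric space in which every geodesic triangle satisfies the 0-thin condition (each side contained in the union of the other two sides) is an ℝ-tree: any two points are joined by a unique arc, which is isometric to a real interval. -/
open Metric Set

/-- `φ` parametrizes a geodesic from `x` to `y` by arclength. -/
def IsGeodesicFrom {X : Type*} [MetricSpace X] (φ : ℝ → X) (x y : X) : Prop :=
  φ 0 = x ∧ φ (dist x y) = y ∧
    ∀ s ∈ Icc (0 : ℝ) (dist x y), ∀ t ∈ Icc (0 : ℝ) (dist x y), dist (φ s) (φ t) = |s - t|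

/-- `G` is (the image of) a geodesic segment from `x` to `y`. -/
def IsGeodesicSeg {X : Type*} [MetricSpace X] (G : Set X) (x y : X) : Prop :=
  ∃ φ : ℝ → X, IsGeodesicFrom φ x y ∧ G = φ '' Icc 0 (dist x y)

/-- A geodesic metric space: any two points are joined by a geodesic. -/
def GeodesicSpace (X : Type*) [MetricSpace X] : Prop :=
  ∀ x y : X, ∃ G : Set X, IsGeodesicSeg G x y

/-- `A` is an arc from `x` to `y`. -/
def IsArc {X : Type*} [MetricSpace X] (A : Set X) (x y : X) : Prop :=
  ∃ γ : ℝ → X, ContinuousOn γ (Icc 0 1) ∧ InjOn γ (Icc 0 1) ∧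
    γ 0 = x ∧ γ 1 = y ∧ A = γ '' Icc 0 1

/-- An `ℝ`-tree: any two distinct points are joined by a unique arc, which is a geodesic
segment (isometric to `[0, d(x,y)]`). -/
def IsRTree (X : Type*) [MetricSpace X] : Prop :=
  ∀ x y : X, x ≠ y → ∃ A : Set X, IsArc A x y ∧
    (∀ A' : Set X, IsArc A' x y → A' = A) ∧ IsGeodesicSeg A x y

/-!
The betweenness condition `d(x, m) + d(m, q) = d(x, q)` is open in `q` away from `m`: if `q'` is
closer to `q` than `m` is, thinness of a triangle `x q' q` whose side `[x, q]` passes through `m`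
puts `m` on `[x, q']`. Hence the points `q` with `m` between `x` and `q` form a clopen subset of any
connected set avoiding `m`, so every connected set containing `x` and `p` contains every geodesic
`[x, p]`; in particular every arc from `x` to `y` contains `[x, y]`. Conversely, for a point `p` of
such an arc, the connected segment `[x, y]` is covered by the closed sets `[x, p]` and `[p, y]`, so
all three share a point `c`. Since `[x, p]` and `[p, y]` lie on the two sub-arcs cut out by `p`,
which meet only at `p`, we get `c = p` and `p ∈ [x, y]`.
-/

def IsZeroThin (X : Type*) [MetricSpace X] : Prop :=
  ∀ x y z : X, ∀ Gxy Gyz Gxz : Set X,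
    IsGeodesicSeg Gxy x y → IsGeodesicSeg Gyz y z → IsGeodesicSeg Gxz x z → Gxz ⊆ Gxy ∪ Gyz

section

variable {X : Type*} [MetricSpace X]

namespace IsGeodesicFrom

variable {φ : ℝ → X} {x y : X}

theorem dist_left (h : IsGeodesicFrom φ x y) {s : ℝ} (hs : s ∈ Icc 0 (dist x y)) :
    dist x (φ s) = s := by
  rw [← h.1, h.2.2 0 ⟨le_rfl, dist_nonneg⟩ s hs, zero_sub, abs_neg, abs_of_nonneg hs.1]

theorem dist_right (h : IsGeodesicFrom φ x y) {s : ℝ} (hs : s ∈ Icc 0 (dist x y)) :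
    dist (φ s) y = dist x y - s := by
  conv_lhs => rw [← h.2.1]
  rw [h.2.2 s hs _ ⟨dist_nonneg, le_rfl⟩, abs_sub_comm, abs_of_nonneg (sub_nonneg.2 hs.2)]

theorem lipschitzOnWith (h : IsGeodesicFrom φ x y) :
    LipschitzOnWith 1 φ (Icc 0 (dist x y)) :=
  LipschitzOnWith.of_dist_le_mul fun s hs t ht => by
    rw [h.2.2 s hs t ht, NNReal.coe_one, one_mul, Real.dist_eq]

theorem continuousOn (h : IsGeodesicFrom φ x y) : ContinuousOn φ (Icc 0 (dist x y)) :=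
  h.lipschitzOnWith.continuousOn

theorem injOn (h : IsGeodesicFrom φ x y) : InjOn φ (Icc 0 (dist x y)) := fun s hs t ht hst => by
  have := h.2.2 s hs t ht
  rw [hst, dist_self, eq_comm, abs_eq_zero, sub_eq_zero] at this
  exact this

theorem of_dist_le (h0 : φ 0 = x) (h1 : φ (dist x y) = y)
    (hφ : ∀ s ∈ Icc 0 (dist x y), ∀ t ∈ Icc 0 (dist x y), s ≤ t → dist (φ s) (φ t) ≤ t - s) :
    IsGeodesicFrom φ x y := by
  have hle : ∀ s ∈ Icc 0 (dist x y), ∀ t ∈ Icc 0 (dist x y), s ≤ t →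
      dist (φ s) (φ t) = t - s := by
    intro s hs t ht hst
    have hxs := hφ 0 ⟨le_rfl, dist_nonneg⟩ s hs hs.1
    have hty := hφ t ht _ ⟨dist_nonneg, le_rfl⟩ ht.2
    rw [h0] at hxs
    rw [h1] at hty
    linarith [hφ s hs t ht hst, dist_triangle4 x (φ s) (φ t) y]
  refine ⟨h0, h1, fun s hs t ht => ?_⟩
  rcases le_total s t with hst | hts
  · rw [hle s hs t ht hst, abs_sub_comm, abs_of_nonneg (sub_nonneg.2 hst)]
  · rw [dist_comm, hle t ht s hs hts, abs_of_nonneg (sub_nonneg.2 hts)]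

end IsGeodesicFrom

namespace IsGeodesicSeg

variable {G : Set X} {x y : X}

theorem left_mem (h : IsGeodesicSeg G x y) : x ∈ G := by
  obtain ⟨φ, hφ, rfl⟩ := h
  exact ⟨0, ⟨le_rfl, dist_nonneg⟩, hφ.1⟩

theorem right_mem (h : IsGeodesicSeg G x y) : y ∈ G := by
  obtain ⟨φ, hφ, rfl⟩ := h
  exact ⟨dist x y, ⟨dist_nonneg, le_rfl⟩, hφ.2.1⟩

theorem dist_add_dist_of_mem (h : IsGeodesicSeg G x y) {z : X} (hz : z ∈ G) :
    dist x z + dist z y = dist x y := by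
  obtain ⟨φ, hφ, rfl⟩ := h
  obtain ⟨s, hs, rfl⟩ := hz
  rw [hφ.dist_left hs, hφ.dist_right hs, add_sub_cancel]

theorem isCompact (h : IsGeodesicSeg G x y) : IsCompact G := by
  obtain ⟨φ, hφ, rfl⟩ := h
  exact isCompact_Icc.image_of_continuousOn hφ.continuousOn

theorem isPreconnected (h : IsGeodesicSeg G x y) : IsPreconnected G := by
  obtain ⟨φ, hφ, rfl⟩ := h
  exact isPreconnected_Icc.image φ hφ.continuousOn

theorem isArc (h : IsGeodesicSeg G x y) (hxy : x ≠ y) : IsArc G x y := by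
  obtain ⟨φ, hφ, rfl⟩ := h
  have hd : 0 < dist x y := dist_pos.2 hxy
  have hmaps : MapsTo (· * dist x y) (Icc (0 : ℝ) 1) (Icc 0 (dist x y)) := fun t ht =>
    ⟨mul_nonneg ht.1 hd.le, mul_le_of_le_one_left hd.le ht.2⟩
  refine ⟨φ ∘ (· * dist x y), hφ.continuousOn.comp (by fun_prop) hmaps,
    hφ.injOn.comp (mul_left_injective₀ hd.ne').injOn hmaps, by simp [hφ.1], by simp [hφ.2.1], ?_⟩
  rw [image_comp, image_mul_right_Icc zero_le_one hd.le, zero_mul, one_mul]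

theorem union {G' : Set X} {m : X} (hm : dist x m + dist m y = dist x y)
    (h : IsGeodesicSeg G x m) (h' : IsGeodesicSeg G' m y) : IsGeodesicSeg (G ∪ G') x y := by
  obtain ⟨φ, hφ, rfl⟩ := h
  obtain ⟨φ', hφ', rfl⟩ := h'
  set a := dist x m
  set b := dist m y
  let ψ : ℝ → X := fun t => if t ≤ a then φ t else φ' (t - a)
  have hψ : ∀ t ≤ a, ψ t = φ t := fun t ht => if_pos ht
  have hψ' : ∀ t, a ≤ t → ψ t = φ' (t - a) := by
    intro t ht
    rcases ht.eq_or_lt with rfl | ht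
    · rw [hψ _ le_rfl, sub_self, hφ.2.1, hφ'.1]
    · exact if_neg (not_le.2 ht)
  have hleft : ∀ s t, 0 ≤ s → s ≤ t → t ≤ a → dist (ψ s) (ψ t) ≤ t - s := by
    intro s t hs hst hta
    rw [hψ s (hst.trans hta), hψ t hta, hφ.2.2 s ⟨hs, hst.trans hta⟩ t ⟨hs.trans hst, hta⟩,
      abs_sub_comm, abs_of_nonneg (sub_nonneg.2 hst)]
  have hright : ∀ s t, a ≤ s → s ≤ t → t ≤ a + b → dist (ψ s) (ψ t) ≤ t - s := by
    intro s t has hst htb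
    rw [hψ' s has, hψ' t (has.trans hst),
      hφ'.2.2 (s - a) ⟨by linarith, by linarith⟩ (t - a) ⟨by linarith, by linarith⟩,
      abs_sub_comm, abs_of_nonneg (by linarith)]
    linarith
  have hb : 0 ≤ b := dist_nonneg
  refine ⟨ψ, IsGeodesicFrom.of_dist_le ?_ ?_ fun s hs t ht hst => ?_, ?_⟩
  · rw [hψ 0 dist_nonneg, hφ.1]
  · rw [hψ' _ (by linarith), ← hm, add_sub_cancel_left, hφ'.2.1]
  · rw [← hm] at hs ht
    rcases le_total t a with hta | hat
    · exact hleft s t hs.1 hst hta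
    rcases le_total a s with has | hsa
    · exact hright s t has hst ht.2
    calc dist (ψ s) (ψ t) ≤ dist (ψ s) (ψ a) + dist (ψ a) (ψ t) := dist_triangle _ _ _
      _ ≤ (a - s) + (t - a) := add_le_add (hleft s a hs.1 hsa le_rfl) (hright a t le_rfl hat ht.2)
      _ = t - s := by ring
  · have hsplit : ψ '' Icc a (dist x y) = φ' '' Icc 0 b := by
      rw [← hm, add_comm a b]
      nth_rewrite 1 [← zero_add a]
      rw [← image_add_const_Icc, image_image]
      exact image_congr fun u hu => by rw [hψ' _ (by linarith [hu.1]), add_sub_cancel_right]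
    rw [← Icc_union_Icc_eq_Icc dist_nonneg (by linarith : a ≤ dist x y), image_union, hsplit,
      image_congr fun t ht => hψ t ht.2]

end IsGeodesicSeg

namespace IsZeroThin

theorem dist_add_dist_of_dist_lt (hthin : IsZeroThin X) (hgeo : GeodesicSpace X) {x m q q' : X}
    (hq : dist x m + dist m q = dist x q) (hq' : dist q' q < dist m q) :
    dist x m + dist m q' = dist x q' := by
  obtain ⟨Gxm, hGxm⟩ := hgeo x m
  obtain ⟨Gmq, hGmq⟩ := hgeo m q
  obtain ⟨Gxq', hGxq'⟩ := hgeo x q'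
  obtain ⟨Gq'q, hGq'q⟩ := hgeo q' q
  rcases hthin x q' q Gxq' Gq'q _ hGxq' hGq'q (hGxm.union hq hGmq)
    (mem_union_left _ hGxm.right_mem) with hm | hm
  · exact hGxq'.dist_add_dist_of_mem hm
  · linarith [hGq'q.dist_add_dist_of_mem hm, dist_nonneg (x := q') (y := m)]

theorem subset_of_isPreconnected (hthin : IsZeroThin X) (hgeo : GeodesicSpace X)
    {S G : Set X} {x p : X} (hS : IsPreconnected S) (hxS : x ∈ S) (hpS : p ∈ S)
    (hG : IsGeodesicSeg G x p) : G ⊆ S := by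
  intro m hmG
  by_contra hmS
  have := Subtype.preconnectedSpace hS
  let A : Set S := {q | dist x m + dist m q = dist x q}
  have hA : IsClopen A := by
    refine ⟨isClosed_eq (by fun_prop) (by fun_prop), Metric.isOpen_iff.2 fun q hq => ?_⟩
    have hmq : 0 < dist m q := dist_pos.2 fun h => hmS (h ▸ q.2)
    exact ⟨dist m q, hmq, fun q' hq' => hthin.dist_add_dist_of_dist_lt hgeo hq hq'⟩
  have hp : (⟨p, hpS⟩ : S) ∈ A := hG.dist_add_dist_of_mem hmG
  have hx : (⟨x, hxS⟩ : S) ∉ A := fun h => by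
    have hxm : dist x m = 0 := by
      change dist x m + dist m x = dist x x at h
      linarith [dist_nonneg (x := x) (y := m), dist_comm x m, dist_self x]
    exact hmS (dist_eq_zero.1 hxm ▸ hxS)
  rcases isClopen_iff.1 hA with h | h
  · exact (h ▸ hp : _)
  · exact hx (h ▸ mem_univ _)

theorem inter_inter_nonempty (hthin : IsZeroThin X) {G Gxp Gpy : Set X} {x p y : X}
    (hG : IsGeodesicSeg G x y) (hGxp : IsGeodesicSeg Gxp x p) (hGpy : IsGeodesicSeg Gpy p y) :
    (G ∩ Gxp ∩ Gpy).Nonempty := by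
  rw [inter_assoc]
  exact isPreconnected_closed_iff.1 hG.isPreconnected _ _ hGxp.isCompact.isClosed
    hGpy.isCompact.isClosed (hthin x p y Gxp Gpy G hGxp hGpy hG)
    ⟨x, hG.left_mem, hGxp.left_mem⟩ ⟨y, hG.right_mem, hGpy.right_mem⟩

theorem isArc_eq (hthin : IsZeroThin X) (hgeo : GeodesicSpace X) {A G : Set X} {x y : X}
    (hA : IsArc A x y) (hG : IsGeodesicSeg G x y) : A = G := by
  obtain ⟨γ, hγc, hγi, hγ0, hγ1, rfl⟩ := hA
  refine Subset.antisymm ?_ (hthin.subset_of_isPreconnected hgeo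
    (isPreconnected_Icc.image γ hγc) ⟨0, ⟨le_rfl, zero_le_one⟩, hγ0⟩
    ⟨1, ⟨zero_le_one, le_rfl⟩, hγ1⟩ hG)
  rintro _ ⟨t, ht, rfl⟩
  obtain ⟨Gxp, hGxp⟩ := hgeo x (γ t)
  obtain ⟨Gpy, hGpy⟩ := hgeo (γ t) y
  obtain ⟨c, ⟨hcG, hcxp⟩, hcpy⟩ := hthin.inter_inter_nonempty hG hGxp hGpy
  obtain ⟨t₁, ht₁, rfl⟩ := hthin.subset_of_isPreconnected hgeo
    (isPreconnected_Icc.image γ (hγc.mono (Icc_subset_Icc_right ht.2)))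
    ⟨0, ⟨le_rfl, ht.1⟩, hγ0⟩ ⟨t, ⟨ht.1, le_rfl⟩, rfl⟩ hGxp hcxp
  obtain ⟨t₂, ht₂, ht₂₁⟩ := hthin.subset_of_isPreconnected hgeo
    (isPreconnected_Icc.image γ (hγc.mono (Icc_subset_Icc_left ht.1)))
    ⟨t, ⟨le_rfl, ht.2⟩, rfl⟩ ⟨1, ⟨ht.2, le_rfl⟩, hγ1⟩ hGpy hcpy
  have h₁₂ : t₂ = t₁ := hγi ⟨ht.1.trans ht₂.1, ht₂.2⟩ ⟨ht₁.1, ht₁.2.trans ht.2⟩ ht₂₁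
  rwa [le_antisymm ht₁.2 (h₁₂ ▸ ht₂.1)] at hcG

end IsZeroThin

end

/-- A geodesic metric space in which every geodesic triangle is `0`-thin (each side is
contained in the union of the other two sides) is an `ℝ`-tree. -/
theorem zero_hyperbolic_implies_rTree {X : Type*} [MetricSpace X]
    (hgeo : GeodesicSpace X)
    (hthin : ∀ x y z : X, ∀ Gxy Gyz Gxz : Set X,
      IsGeodesicSeg Gxy x y → IsGeodesicSeg Gyz y z → IsGeodesicSeg Gxz x z →
        Gxz ⊆ Gxy ∪ Gyz) :
    IsRTree X := by
  intro x y hxy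
  obtain ⟨G, hG⟩ := hgeo x y
  exact ⟨G, hG.isArc hxy, fun A hA => IsZeroThin.isArc_eq hthin hgeo hA hG, hG⟩
end

section
/- Let X be a compact metric space, Y a totally disconnected compact metric space, and ~ an equivalence relation on Y such that each equivalence class has at most M < ∞ elements and the quotient Y/~ is homeomorphic to X. Then the topological (covering) dimension of X is at most M − 1. -/
open Set

/-- The topological (covering) dimension of `X` is at most `n`: every open cover has an
open refinement in which every point lies in at most `n+1` members. -/
def CovDimLE (X : Type*) [TopologicalSpace X] (n : ℕ) : Prop :=
  ∀ (ι : Type) (U : ι → Set X), (∀ i, IsOpen (U i)) → (⋃ i, U i) = univ →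
    ∃ (κ : Type) (V : κ → Set X), (∀ k, IsOpen (V k)) ∧ (⋃ k, V k) = univ ∧
      (∀ k, ∃ i, V k ⊆ U i) ∧
      ∀ x : X, {k | x ∈ V k}.Finite ∧ {k | x ∈ V k}.ncard ≤ n + 1


/-- Swelling lemma: a finite family of closed sets in a normal space can be thickened to
open sets (inside given open neighborhoods) so that every empty intersection of the
closed sets remains empty for the closures of the open thickenings. -/
lemma swelling_aux {X : Type*} [TopologicalSpace X] [NormalSpace X] {N : ℕ}
    (A G : Fin N → Set X) (hA : ∀ j, IsClosed (A j)) (hG : ∀ j, IsOpen (G j))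
    (hAG : ∀ j, A j ⊆ G j) (s : Finset (Fin N)) :
    ∃ B : Fin N → Set X, (∀ j ∈ s, IsOpen (B j) ∧ A j ⊆ B j ∧ closure (B j) ⊆ G j) ∧
      (∀ j ∉ s, B j = A j) ∧
      ∀ T : Finset (Fin N), (⋂ j ∈ T, A j) = ∅ → (⋂ j ∈ T, closure (B j)) = ∅ := by
  classical
  induction s using Finset.induction_on with
  | empty =>
      refine ⟨A, by simp, fun j _ => rfl, fun T hT => ?_⟩
      have hc : ∀ j, closure (A j) = A j := fun j => (hA j).closure_eq
      simpa [hc] using hT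
  | @insert j₀ s hj₀ ih =>
      obtain ⟨B, hBs, hBe, hBT⟩ := ih
      set 𝒯 : Finset (Finset (Fin N)) :=
        Finset.univ.filter (fun T => j₀ ∉ T ∧ ((⋂ j ∈ T, A j) ∩ A j₀ = ∅)) with h𝒯
      set C : Set X := ⋃ T ∈ 𝒯, ⋂ j ∈ T, closure (B j) with hC
      have hCclosed : IsClosed C := by
        apply isClosed_biUnion_finset
        intro T _
        exact isClosed_biInter fun j _ => isClosed_closure
      have hdisj : A j₀ ∩ C = ∅ := by
        ext x
        simp only [mem_inter_iff, mem_empty_iff_false, iff_false, not_and]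
        intro hxA hxC
        rw [hC, mem_iUnion₂] at hxC
        obtain ⟨T, hT𝒯, hxT⟩ := hxC
        rw [h𝒯, Finset.mem_filter] at hT𝒯
        obtain ⟨-, hj₀T, hTA⟩ := hT𝒯
        have hins : (⋂ j ∈ insert j₀ T, A j) = ∅ := by
          rw [Finset.set_biInter_insert]
          rw [inter_comm]
          exact hTA
        have := hBT _ hins
        rw [Finset.set_biInter_insert] at this
        have hxB : x ∈ closure (B j₀) := by
          rw [hBe j₀ hj₀, (hA j₀).closure_eq]; exact hxA
        exact absurd this (by
          apply Set.Nonempty.ne_empty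
          exact ⟨x, hxB, hxT⟩)
      have hsub : A j₀ ⊆ Cᶜ ∩ G j₀ := by
        intro x hx
        refine ⟨fun hxC => ?_, hAG j₀ hx⟩
        have : x ∈ A j₀ ∩ C := ⟨hx, hxC⟩
        rw [hdisj] at this; exact this
      obtain ⟨u, hu_open, hAu, hclu⟩ :=
        normal_exists_closure_subset (hA j₀) (hCclosed.isOpen_compl.inter (hG j₀)) hsub
      refine ⟨Function.update B j₀ u, ?_, ?_, ?_⟩
      · intro j hj
        rcases Finset.mem_insert.1 hj with rfl | hjs
        · simp only [Function.update_self]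
          exact ⟨hu_open, hAu, fun x hx => (hclu hx).2⟩
        · have hne : j ≠ j₀ := fun hjj => hj₀ (hjj ▸ hjs)
          simp only [Function.update_of_ne hne]
          exact hBs j hjs
      · intro j hj
        have hne : j ≠ j₀ := fun hjj => hj (hjj ▸ Finset.mem_insert_self j₀ s)
        have hjs : j ∉ s := fun hjs => hj (Finset.mem_insert_of_mem hjs)
        rw [Function.update_of_ne hne]
        exact hBe j hjs
      · intro T hT
        by_cases hj₀T : j₀ ∈ T
        · set T₀ := T.erase j₀ with hT₀
          have hTeq : insert j₀ T₀ = T := Finset.insert_erase hj₀T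
          have hj₀T₀ : j₀ ∉ T₀ := Finset.notMem_erase _ _
          have hAT₀ : (⋂ j ∈ T₀, A j) ∩ A j₀ = ∅ := by
            rw [inter_comm, ← Finset.set_biInter_insert, hTeq]
            exact hT
          have hT₀𝒯 : T₀ ∈ 𝒯 := by
            rw [h𝒯, Finset.mem_filter]
            exact ⟨Finset.mem_univ _, hj₀T₀, hAT₀⟩
          rw [← hTeq, Finset.set_biInter_insert]
          have h1 : (⋂ j ∈ T₀, closure (Function.update B j₀ u j)) =
              ⋂ j ∈ T₀, closure (B j) := by
            apply Set.iInter₂_congr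
            intro j hjT₀
            rw [Function.update_of_ne (fun hjj => hj₀T₀ (by rw [← hjj]; exact hjT₀))]
          rw [h1, Function.update_self]
          have h2 : (⋂ j ∈ T₀, closure (B j)) ⊆ C := by
            intro x hx
            rw [hC, mem_iUnion₂]
            exact ⟨T₀, hT₀𝒯, hx⟩
          ext x
          simp only [mem_inter_iff, mem_empty_iff_false, iff_false, not_and]
          intro hxu hxT₀
          exact (hclu hxu).1 (h2 hxT₀)
        · have h1 : (⋂ j ∈ T, closure (Function.update B j₀ u j)) =
              ⋂ j ∈ T, closure (B j) := by
            apply Set.iInter₂_congr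
            intro j hjT
            rw [Function.update_of_ne (fun hjj => hj₀T (by rw [← hjj]; exact hjT))]
          rw [h1]
          exact hBT T hT

/-- If a compact metric space `X` is homeomorphic to the quotient of a totally
disconnected compact metric space `Y` by an equivalence relation all of whose classes
have at most `M` elements, then `X` has topological dimension at most `M - 1`. -/
theorem covDim_le_of_quotient_totallyDisconnected
    {X : Type*} [MetricSpace X] [CompactSpace X]
    {Y : Type*} [MetricSpace Y] [CompactSpace Y] [TotallyDisconnectedSpace Y]
    (r : Y → Y → Prop) (hr : Equivalence r) (M : ℕ) (hM : 1 ≤ M)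
    (hclass : ∀ y : Y, {y' | r y y'}.Finite ∧ {y' | r y y'}.ncard ≤ M)
    (h : Nonempty (Quot r ≃ₜ X)) :
    CovDimLE X (M - 1) := by
  classical
  intro ι U hUopen hUcov
  obtain ⟨e⟩ := h
  set q : Y → X := fun y => e (Quot.mk r y) with hq
  have hqcont : Continuous q := e.continuous.comp continuous_quot_mk
  have hqsurj : Function.Surjective q := e.surjective.comp Quot.mk_surjective
  have hqr : ∀ y y', q y = q y' ↔ r y y' := by
    intro y y'
    constructor
    · intro hqy
      exact hr.eqvGen_iff.1 (Quot.eqvGen_exact (e.injective hqy))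
    · intro hryy'
      exact congrArg e (Quot.sound hryy')
  have hfib : ∀ x : X, {y | q y = x}.Finite ∧ {y | q y = x}.ncard ≤ M := by
    intro x
    obtain ⟨y, hy⟩ := hqsurj x
    have heq : {y' | q y' = x} = {y' | r y y'} := by
      ext y'
      simp only [mem_setOf_eq, ← hy]
      rw [show (q y' = q y) ↔ (q y = q y') from eq_comm, hqr]
    rw [heq]
    exact hclass y
  -- clopen neighborhoods refining the pulled-back cover
  have hCex : ∀ y : Y, ∃ C : Set Y, IsClopen C ∧ y ∈ C ∧ ∃ i, C ⊆ q ⁻¹' (U i) := by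
    intro y
    have : q y ∈ ⋃ i, U i := by rw [hUcov]; exact mem_univ _
    obtain ⟨i, hi⟩ := mem_iUnion.1 this
    obtain ⟨C, hC, hyC, hCU⟩ :=
      compact_exists_isClopen_in_isOpen ((hUopen i).preimage hqcont) hi
    exact ⟨C, hC, hyC, i, hCU⟩
  choose C hCclopen hyC hCU using hCex
  have hcov : univ ⊆ ⋃ y : Y, C y := fun y _ => mem_iUnion.2 ⟨y, hyC y⟩
  obtain ⟨t, ht⟩ := isCompact_univ.elim_finite_subcover C (fun y => (hCclopen y).2) hcov
  set N := t.card with hN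
  set g : Fin N → Y := fun j => (t.equivFin.symm j : Y) with hg
  set D : Fin N → Set Y := fun j => C (g j) with hD
  have hDclopen : ∀ j, IsClopen (D j) := fun j => hCclopen _
  have hDcov : ∀ y : Y, ∃ j, y ∈ D j := by
    intro y
    obtain ⟨y₀, hy₀t, hyy₀⟩ := mem_iUnion₂.1 (ht (mem_univ y))
    refine ⟨t.equivFin ⟨y₀, hy₀t⟩, ?_⟩
    rw [hD]
    simp only [hg, Equiv.symm_apply_apply]
    exact hyy₀
  set W : Fin N → Set Y := fun j => D j \ ⋃ k ∈ Finset.Iio j, D k with hW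
  have hWclopen : ∀ j, IsClopen (W j) := by
    intro j
    exact (hDclopen j).diff (isClopen_biUnion_finset fun k _ => hDclopen k)
  have hWD : ∀ j, W j ⊆ D j := fun j => diff_subset
  have hWdisj : ∀ j k, j ≠ k → W j ∩ W k = ∅ := by
    intro j k hjk
    rcases lt_or_gt_of_ne hjk with hlt | hlt
    · ext y
      simp only [mem_inter_iff, mem_empty_iff_false, iff_false, not_and]
      intro hyj hyk
      exact hyk.2 (mem_iUnion₂.2 ⟨j, Finset.mem_Iio.2 hlt, hyj.1⟩)
    · ext y
      simp only [mem_inter_iff, mem_empty_iff_false, iff_false, not_and]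
      intro hyj hyk
      exact hyj.2 (mem_iUnion₂.2 ⟨k, Finset.mem_Iio.2 hlt, hyk.1⟩)
  have hWcov : ∀ y : Y, ∃ j, y ∈ W j := by
    intro y
    have hne : (Finset.univ.filter fun j => y ∈ D j).Nonempty := by
      obtain ⟨j, hj⟩ := hDcov y
      exact ⟨j, Finset.mem_filter.2 ⟨Finset.mem_univ _, hj⟩⟩
    set j := (Finset.univ.filter fun j => y ∈ D j).min' hne with hj
    refine ⟨j, (Finset.mem_filter.1 ((Finset.univ.filter fun j => y ∈ D j).min'_mem hne)).2, ?_⟩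
    intro hy
    obtain ⟨k, hk, hyk⟩ := mem_iUnion₂.1 hy
    have hkmem : k ∈ Finset.univ.filter fun j => y ∈ D j :=
      Finset.mem_filter.2 ⟨Finset.mem_univ _, hyk⟩
    exact absurd (Finset.min'_le _ _ hkmem) (not_le.2 (Finset.mem_Iio.1 hk))
  -- the closed images
  set A : Fin N → Set X := fun j => q '' (W j) with hA
  have hAclosed : ∀ j, IsClosed (A j) :=
    fun j => ((hWclopen j).1.isCompact.image hqcont).isClosed
  set idx : Fin N → ι := fun j => (hCU (g j)).choose with hidx
  have hAsub : ∀ j, A j ⊆ U (idx j) := by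
    intro j x hx
    obtain ⟨y, hyW, hyq⟩ := hx
    have : y ∈ q ⁻¹' (U (idx j)) := (hCU (g j)).choose_spec (hWD j hyW)
    rw [← hyq]
    exact this
  have hAcov : (⋃ j, A j) = univ := by
    apply eq_univ_of_forall
    intro x
    obtain ⟨y, hy⟩ := hqsurj x
    obtain ⟨j, hj⟩ := hWcov y
    exact mem_iUnion.2 ⟨j, y, hj, hy⟩
  -- order of the closed family
  have hord : ∀ T : Finset (Fin N), M + 1 ≤ T.card → (⋂ j ∈ T, A j) = ∅ := by
    intro T hT
    by_contra hne
    obtain ⟨x, hx⟩ := nonempty_iff_ne_empty.2 hne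
    have hsel : ∀ j : Fin N, ∃ y : Y, j ∈ T → (y ∈ W j ∧ q y = x) := by
      intro j
      by_cases hjT : j ∈ T
      · have hxA : x ∈ A j := by
          have := mem_iInter₂.1 hx j hjT
          exact this
        obtain ⟨y, hy⟩ := hxA
        exact ⟨y, fun _ => hy⟩
      · obtain ⟨y, -⟩ := hqsurj x
        exact ⟨y, fun hc => absurd hc hjT⟩
    choose f hf using hsel
    have hinj : Set.InjOn f (T : Set (Fin N)) := by
      intro j hj k hk hjk
      by_contra hne'
      have h1 := (hf j hj).1
      have h2 := (hf k hk).1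
      rw [hjk] at h1
      have : f k ∈ W j ∩ W k := ⟨h1, h2⟩
      rw [hWdisj j k hne'] at this
      exact this
    have hsub : f '' (T : Set (Fin N)) ⊆ {y | q y = x} := by
      rintro y ⟨j, hj, rfl⟩
      exact (hf j hj).2
    have hcard : T.card ≤ M := by
      calc T.card = (f '' (T : Set (Fin N))).ncard := by
            rw [Set.ncard_image_of_injOn hinj, Set.ncard_coe_finset]
        _ ≤ {y | q y = x}.ncard := Set.ncard_le_ncard hsub (hfib x).1
        _ ≤ M := (hfib x).2
    omega
  -- swell
  obtain ⟨B, hBs, -, hBT⟩ :=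
    swelling_aux A (fun j => U (idx j)) hAclosed (fun j => hUopen (idx j)) hAsub Finset.univ
  refine ⟨Fin N, B, fun k => (hBs k (Finset.mem_univ k)).1, ?_, ?_, ?_⟩
  · apply eq_univ_of_forall
    intro x
    have : x ∈ ⋃ j, A j := by rw [hAcov]; exact mem_univ x
    obtain ⟨j, hj⟩ := mem_iUnion.1 this
    exact mem_iUnion.2 ⟨j, (hBs j (Finset.mem_univ j)).2.1 hj⟩
  · intro k
    exact ⟨idx k, fun x hx => (hBs k (Finset.mem_univ k)).2.2 (subset_closure hx)⟩
  · intro x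
    refine ⟨Set.toFinite _, ?_⟩
    by_contra hgt
    push_neg at hgt
    set S : Finset (Fin N) := Finset.univ.filter fun k => x ∈ B k with hS
    have hScard : M + 1 ≤ S.card := by
      have : {k | x ∈ B k}.ncard = S.card := by
        rw [hS]
        rw [← Set.ncard_coe_finset]
        congr 1
        ext k
        simp
      omega
    have hempty := hBT S (hord S hScard)
    have hxS : x ∈ ⋂ j ∈ S, closure (B j) := by
      apply mem_iInter₂.2
      intro j hj
      exact subset_closure (Finset.mem_filter.1 hj).2
    rw [hempty] at hxS
    exact hxS
end

section
/- Let X be a geodesic δ-hyperbolic space, let R be a bi-infinite geodesic with endpoints η, μ ∈ ∂X, and let r ∈ X. Let a be a point of R at minimal distance from r, and let b be a point of R such that d(b,[r,η]) ≤ δ and d(b,[r,μ]) ≤ δ for some geodesic rays [r,η], [r,μ] from r to η and μ. Then d(a,b) ≤ 4δ. -/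
open Metric Set

/-- `δ`-hyperbolicity via thin triangles. -/
def DeltaHyp (X : Type*) [MetricSpace X] (δ : ℝ) : Prop :=
  ∀ x y z : X, ∀ Gxy Gyz Gxz : Set X,
    IsGeodesicSeg Gxy x y → IsGeodesicSeg Gyz y z → IsGeodesicSeg Gxz x z →
      ∀ p ∈ Gxz, infDist p (Gxy ∪ Gyz) ≤ δ

/-- `γ` is a geodesic ray from `r` (isometric on `[0,∞)`). -/
def IsRayFrom {X : Type*} [MetricSpace X] (r : X) (γ : ℝ → X) : Prop :=
  γ 0 = r ∧ ∀ s ≥ (0 : ℝ), ∀ t ≥ (0 : ℝ), dist (γ s) (γ t) = |s - t|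

/-- The endpoints of a geodesic segment belong to it. -/
lemma seg_left_mem {X : Type*} [MetricSpace X] {G : Set X} {x y : X}
    (hG : IsGeodesicSeg G x y) : x ∈ G := by
  obtain ⟨φ, ⟨h0, hL, hiso⟩, rfl⟩ := hG
  exact ⟨0, ⟨le_rfl, dist_nonneg⟩, h0⟩

/-- Distances add along a geodesic segment. -/
lemma seg_add {X : Type*} [MetricSpace X] {G : Set X} {x y : X}
    (hG : IsGeodesicSeg G x y) {p : X} (hp : p ∈ G) :
    dist x p + dist p y = dist x y := by
  obtain ⟨φ, ⟨h0, hL, hiso⟩, rfl⟩ := hG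
  obtain ⟨u, hu, rfl⟩ := hp
  have hxy : (0:ℝ) ≤ dist x y := dist_nonneg
  have e1 : dist x (φ u) = u := by
    conv_lhs => rw [← h0]
    rw [hiso 0 ⟨le_rfl, hxy⟩ u hu, zero_sub, abs_neg, abs_of_nonneg hu.1]
  have e2 : dist (φ u) y = dist x y - u := by
    have h2 := hiso u hu (dist x y) ⟨hxy, le_rfl⟩
    rw [hL] at h2
    rw [h2, abs_of_nonpos (by linarith [hu.2])]
    ring
  rw [e1, e2]; ring

/-- Key lemma: if `a = R s`, `b = R t` with `s ≤ t`, `d(r,a) ≤ d(r,b)`, the ray `P` from `r`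
tracks `R(-·)` within `M`, and `b` is within `δ` of the ray `P`, then `d(a,b) ≤ 4δ`. -/
lemma key_lemma {X : Type*} [MetricSpace X] (hgeo : GeodesicSpace X) {δ : ℝ}
    (hhyp : DeltaHyp X δ) (r : X) (R : ℝ → X)
    (hR : ∀ s t : ℝ, dist (R s) (R t) = |s - t|)
    (P : ℝ → X) (hP : IsRayFrom r P) (M : ℝ)
    (hM : ∀ t ≥ (0:ℝ), dist (P t) (R (-t)) ≤ M)
    (s t : ℝ) (hst : s ≤ t) (hmin : dist r (R s) ≤ dist r (R t))
    (hbP : infDist (R t) (P '' Ici 0) ≤ δ) : dist (R s) (R t) ≤ 4 * δ := by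
  have hM0 : 0 ≤ M := le_trans dist_nonneg (by simpa using hM 0 le_rfl)
  have hδ0 : 0 ≤ δ := le_trans infDist_nonneg hbP
  refine le_of_forall_pos_le_add fun ε hε => ?_
  have he0 : 0 < ε / 4 := by positivity
  have hne : (P '' Ici 0).Nonempty := ⟨P 0, 0, Set.self_mem_Ici, rfl⟩
  have hlt : infDist (R t) (P '' Ici 0) < δ + ε / 4 := lt_of_le_of_lt hbP (by linarith)
  obtain ⟨z, hzmem, hbz⟩ := (infDist_lt_iff hne).1 hlt
  obtain ⟨v, hv0, rfl⟩ := hzmem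
  have hv0' : (0:ℝ) ≤ v := hv0
  set Z : ℝ := max v (M + δ + ε + |s| + 1) with hZdef
  have hZv : v ≤ Z := le_max_left _ _
  have hZ2 : M + δ + ε + |s| + 1 ≤ Z := le_max_right _ _
  have hZ0 : (0:ℝ) ≤ Z := le_trans hv0' hZv
  have habs : -|s| ≤ s := neg_abs_le s
  have habs' : s ≤ |s| := le_abs_self s
  have hsZ : -Z ≤ s := by linarith
  -- distances along the ray P
  have hray : ∀ u w : ℝ, 0 ≤ u → u ≤ w → dist (P u) (P w) = w - u := by
    intro u w hu huw
    rw [hP.2 u hu w (hu.trans huw), abs_of_nonpos (by linarith)]; ring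
  have hrPZ : dist r (P Z) = Z := by
    have h0 := hray 0 Z le_rfl hZ0; rw [hP.1, sub_zero] at h0; exact h0
  have hzPZ : dist (P v) (P Z) = Z - v := hray v Z hv0' hZv
  have hrPv : dist r (P v) = v := by
    have h0 := hray 0 v le_rfl hv0'; rw [hP.1, sub_zero] at h0; exact h0
  -- the R-segment from R t back to R (-Z)
  have hDt : dist (R t) (R (-Z)) = t + Z := by
    rw [hR, abs_of_nonneg (by linarith : (0:ℝ) ≤ t - -Z)]; ring
  have hGseg : IsGeodesicSeg ((fun x => R (t - x)) '' Icc 0 (dist (R t) (R (-Z))))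
      (R t) (R (-Z)) := by
    refine ⟨fun x => R (t - x), ⟨by simp, ?_, ?_⟩, rfl⟩
    · show R (t - dist (R t) (R (-Z))) = R (-Z)
      rw [hDt]; congr 1; ring
    · intro u hu w hw
      show dist (R (t - u)) (R (t - w)) = |u - w|
      rw [hR, show (t - u) - (t - w) = -(u - w) by ring, abs_neg]
  have hamem : R s ∈ (fun x => R (t - x)) '' Icc 0 (dist (R t) (R (-Z))) := by
    refine ⟨t - s, ⟨by linarith, by rw [hDt]; linarith⟩, ?_⟩
    show R (t - (t - s)) = R s
    congr 1; ring
  obtain ⟨Gb, hGb⟩ := hgeo (R t) (P Z)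
  obtain ⟨H, hH⟩ := hgeo (P Z) (R (-Z))
  have hthin2 := hhyp (R t) (P Z) (R (-Z)) Gb H _ hGb hH hGseg (R s) hamem
  have hune : (Gb ∪ H).Nonempty := ⟨R t, Or.inl (seg_left_mem hGb)⟩
  have hlt2 : infDist (R s) (Gb ∪ H) < δ + ε / 4 := lt_of_le_of_lt hthin2 (by linarith)
  obtain ⟨h, hhmem, hah⟩ := (infDist_lt_iff hune).1 hlt2
  rcases hhmem with hh | hh
  · -- h on the geodesic from b = R t to P Z : the main estimate
    have hadd := seg_add hGb hh
    have h1 : dist (R t) (P Z) ≤ dist (R t) (P v) + (Z - v) := by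
      rw [← hzPZ]; exact dist_triangle _ _ _
    have h2 : Z - dist r (R s) ≤ dist (R s) (P Z) := by
      have h3 := dist_triangle r (R s) (P Z)
      rw [hrPZ] at h3; linarith
    have h3 : dist (R s) (P Z) ≤ dist (R s) h + dist h (P Z) := dist_triangle _ _ _
    have h4 : dist r (R t) ≤ dist r (P v) + dist (P v) (R t) := dist_triangle _ _ _
    rw [hrPv, dist_comm (P v) (R t)] at h4
    have hfinal : dist (R s) (R t) ≤ dist (R s) h + dist (R t) h := by
      have h5 := dist_triangle (R s) h (R t)
      rw [dist_comm h (R t)] at h5; exact h5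
    linarith
  · -- h on the short far side : impossible for Z large
    exfalso
    have hadd := seg_add hH hh
    have hPZRZ : dist (P Z) (R (-Z)) ≤ M := hM Z hZ0
    have d1 : dist h (R (-Z)) ≤ M := by
      have := dist_nonneg (x := P Z) (y := h); linarith
    have hsRZ : dist (R s) (R (-Z)) = s + Z := by
      rw [hR, abs_of_nonneg (by linarith : (0:ℝ) ≤ s - -Z)]; ring
    have h6 : dist (R s) (R (-Z)) ≤ dist (R s) h + dist h (R (-Z)) := dist_triangle _ _ _
    linarith

/-- Let `R` be a bi-infinite geodesic with endpoints `η, μ` at infinity, let `Pη, Pμ` be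
geodesic rays from `r` to `η` and `μ` (encoded by being asymptotic to the two ends of `R`
and by the ideal-triangle thinness condition that every point of `R` is `δ`-close to
`Pη ∪ Pμ`). If `a` is a point of `R` at minimal distance from `r` and `b` is a point of
`R` with `d(b,[r,η]) ≤ δ` and `d(b,[r,μ]) ≤ δ`, then `d(a,b) ≤ 4δ`. -/
theorem claim_dist_a_b_le_four_delta {X : Type*} [MetricSpace X] [ProperSpace X]
    (hgeo : GeodesicSpace X) (δ : ℝ) (hδ : 0 ≤ δ) (hhyp : DeltaHyp X δ)
    (r : X) (R : ℝ → X) (hR : ∀ s t : ℝ, dist (R s) (R t) = |s - t|)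
    (Pη Pμ : ℝ → X) (hPη : IsRayFrom r Pη) (hPμ : IsRayFrom r Pμ)
    (hasymη : ∃ M : ℝ, ∀ t ≥ (0 : ℝ), dist (Pη t) (R t) ≤ M)
    (hasymμ : ∃ M : ℝ, ∀ t ≥ (0 : ℝ), dist (Pμ t) (R (-t)) ≤ M)
    (hthin : ∀ t : ℝ, infDist (R t) (Pη '' Ici 0 ∪ Pμ '' Ici 0) ≤ δ)
    (a b : X) (ha : a ∈ range R) (hamin : dist r a = infDist r (range R))
    (hb : b ∈ range R)
    (hbη : infDist b (Pη '' Ici 0) ≤ δ) (hbμ : infDist b (Pμ '' Ici 0) ≤ δ) :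
    dist a b ≤ 4 * δ := by
  obtain ⟨s, hs⟩ := ha
  obtain ⟨t, ht⟩ := hb
  obtain ⟨Mη, hMη⟩ := hasymη
  obtain ⟨Mμ, hMμ⟩ := hasymμ
  have hrab : dist r a ≤ dist r b := by
    rw [hamin]; exact infDist_le_dist_of_mem ⟨t, ht⟩
  rcases le_total s t with hst | hst
  · have hk := key_lemma hgeo hhyp r R hR Pμ hPμ Mμ hMμ s t hst
      (by rw [hs, ht]; exact hrab) (by rw [ht]; exact hbμ)
    rwa [hs, ht] at hk
  · have hR' : ∀ u w : ℝ, dist ((fun x => R (-x)) u) ((fun x => R (-x)) w) = |u - w| := by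
      intro u w
      show dist (R (-u)) (R (-w)) = |u - w|
      rw [hR, show (-u) - (-w) = -(u - w) by ring, abs_neg]
    have hM' : ∀ u ≥ (0:ℝ), dist (Pη u) ((fun x => R (-x)) (-u)) ≤ Mη := by
      intro u hu
      show dist (Pη u) (R (-(-u))) ≤ Mη
      rw [neg_neg]; exact hMη u hu
    have hk := key_lemma hgeo hhyp r (fun x => R (-x)) hR' Pη hPη Mη hM' (-s) (-t)
      (by linarith)
      (by show dist r (R (-(-s))) ≤ dist r (R (-(-t))); rw [neg_neg, neg_neg, hs, ht]; exact hrab)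
      (by show infDist (R (-(-t))) (Pη '' Ici 0) ≤ δ; rw [neg_neg, ht]; exact hbη)
    have hk' : dist (R (-(-s))) (R (-(-t))) ≤ 4 * δ := hk
    rw [neg_neg, neg_neg, hs, ht] at hk'
    exact hk'
end

section
/- Let X be a metric space with topological (covering) dimension n and finite Assouad dimension dim_A(X). Then n ≤ dim_A(X). -/
open Metric Set

/-- The set of admissible Assouad exponents of a metric space `X`: all `s ≥ 0` for which
some `C ≥ 0` bounds the cardinality of every `α`-separated subset of every closed `β`-ball
by `C (β/α)^s`. The Assouad dimension is the infimum of this set. -/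
def AssouadExponents (X : Type*) [MetricSpace X] : Set ℝ :=
  {s : ℝ | 0 ≤ s ∧ ∃ C : ℝ, 0 ≤ C ∧
    ∀ α β : ℝ, 0 < α → α ≤ β → ∀ (x : X) (V : Finset X),
      (∀ v ∈ V, v ∈ closedBall x β) →
      (∀ u ∈ V, ∀ v ∈ V, u ≠ v → α ≤ dist u v) →
      (V.card : ℝ) ≤ C * (β / α) ^ s}

/-!
If `s < n` were an admissible Assouad exponent, counting maximal `ε`-separated sets in balls would
give separability of `X` and `μH[n] X = 0`. A separable metric space with `μH[n] X = 0` has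
covering dimension at most `n - 1`, by induction on `n`. By an Eilenberg-type slicing inequality,
almost every sphere `S(x, r)` has `μH[n - 1] S(x, r) = 0`. Given an open cover, cut `X` along such
spheres, bounding countably many balls each inside a member of the cover, into disjoint open
pieces; the points left over lie in the union `Z` of the spheres, and `μH[n - 1] Z = 0`. By
induction the induced cover of `Z` has an open refinement of multiplicity at most `n`. Extending
each member to the points of `X` strictly closer to it than to the rest of `Z` creates no new
intersections, and adding the disjoint pieces gives multiplicity at most `n + 1`.
-/

open MeasureTheory Filter Function
open scoped ENNReal NNReal Topology

lemma Set.encard_le_coe_of_forall_finite_subset {α : Type*} {S : Set α} {m : ℕ}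
    (h : ∀ T ⊆ S, T.Finite → T.encard ≤ m) : S.encard ≤ m := by
  by_contra! hlt
  obtain ⟨T, hTS, hT⟩ := exists_subset_encard_eq (Order.add_one_le_of_lt hlt)
  have hle := h T hTS (finite_of_encard_eq_coe hT)
  rw [hT] at hle
  exact absurd hle (by norm_cast; omega)

lemma Metric.ediam_closedBall_coe_le {X : Type*} [PseudoMetricSpace X] (x : X) (ε : ℝ≥0) :
    ediam (closedBall x ε) ≤ 2 * ε :=
  closedEBall_coe (x := x) ▸ ediam_closedEBall_le

section Assouad

variable {X : Type*} [MetricSpace X] {s C : ℝ}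

def AssouadBound (X : Type*) [MetricSpace X] (s C : ℝ) : Prop :=
  ∀ α β : ℝ, 0 < α → α ≤ β → ∀ (x : X) (V : Finset X),
    (∀ v ∈ V, v ∈ closedBall x β) →
    (∀ u ∈ V, ∀ v ∈ V, u ≠ v → α ≤ dist u v) →
    (V.card : ℝ) ≤ C * (β / α) ^ s

namespace AssouadBound

lemma card_le_of_isSeparated (h : AssouadBound X s C) {ε : ℝ≥0} (hε : 0 < ε) {β : ℝ}
    (hεβ : ε ≤ β) {x : X} {T : Finset X} (hTx : ↑T ⊆ closedBall x β)
    (hT : IsSeparated ε (T : Set X)) : (T.card : ℝ) ≤ C * (β / ε) ^ s :=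
  h ε β hε hεβ x T (fun _ hv => hTx hv) fun u hu v hv huv => by
    have hεuv : (ε : ℝ≥0∞) < edist u v := hT hu hv huv
    rw [edist_nndist, ENNReal.coe_lt_coe, ← NNReal.coe_lt_coe, coe_nndist] at hεuv
    exact hεuv.le

lemma exists_finset_isCover (h : AssouadBound X s C) {ε : ℝ≥0} (hε : 0 < ε) {β : ℝ}
    (hεβ : ε ≤ β) (x : X) :
    ∃ N : Finset X, IsCover ε (closedBall x β) N ∧ (N.card : ℝ) ≤ C * (β / ε) ^ s := by
  have hsep : ∀ S ⊆ closedBall x β, IsSeparated ε S → S.encard ≤ ⌊C * (β / ε) ^ s⌋₊ :=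
    fun S hS hsep => encard_le_coe_of_forall_finite_subset fun T hT hfin => by
      rw [hfin.encard_eq_coe_toFinset_card, Nat.cast_le]
      exact Nat.le_floor <| h.card_le_of_isSeparated hε hεβ (by simpa using hT.trans hS)
        (by simpa using hsep.subset hT)
  have hpack : packingNumber ε (closedBall x β) ≠ ⊤ :=
    ne_top_of_le_ne_top (ENat.natCast_ne_top _) (iSup₂_le fun S hS => iSup_le (hsep S hS))
  have hfin : (maximalSeparatedSet ε (closedBall x β)).Finite :=
    finite_of_encard_le_coe (hsep _ maximalSeparatedSet_subset isSeparated_maximalSeparatedSet)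
  refine ⟨hfin.toFinset, by simpa using isCover_maximalSeparatedSet hpack, ?_⟩
  exact h.card_le_of_isSeparated hε hεβ (by simpa using maximalSeparatedSet_subset)
    (by simpa using isSeparated_maximalSeparatedSet)

lemma secondCountableTopology (h : AssouadBound X s C) : SecondCountableTopology X := by
  rcases isEmpty_or_nonempty X with hX | ⟨⟨x₀⟩⟩
  · infer_instance
  refine secondCountable_of_almost_dense_set fun ε hε => ?_
  let δ : ℝ≥0 := ⟨min ε 1, by positivity⟩
  have hδ : 0 < δ := lt_min hε one_pos
  choose N hN _ using fun m : ℕ => h.exists_finset_isCover hδ (β := m + 1)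
    (show min ε 1 ≤ (m : ℝ) + 1 by linarith [min_le_right ε 1, m.cast_nonneg' (α := ℝ)]) x₀
  refine ⟨⋃ m, (N m : Set X), countable_iUnion fun m => (N m).countable_toSet, fun x => ?_⟩
  obtain ⟨m, hm⟩ := exists_nat_ge (dist x x₀)
  obtain ⟨y, hy, hxy⟩ := mem_iUnion₂.mp <|
    (hN m).subset_iUnion_closedBall (mem_closedBall.mpr (by linarith))
  exact ⟨y, mem_iUnion.mpr ⟨m, hy⟩, (mem_closedBall.mp hxy).trans (min_le_left _ _)⟩

lemma exists_finset_isCover_card_le_rpow (h : AssouadBound X s C) {β : ℝ≥0} (hβ : 0 < β) (x : X)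
    (k : ℕ) : ∃ N : Finset X, IsCover (β / (k + 1)) (closedBall x β) N ∧
      (N.card : ℝ) ≤ C * ((k : ℝ) + 1) ^ s := by
  obtain ⟨N, hN, hcard⟩ := h.exists_finset_isCover (ε := β / (k + 1)) (div_pos hβ (by positivity))
    (NNReal.coe_le_coe.mpr (div_le_self zero_le (by simp))) x
  refine ⟨N, hN, hcard.trans_eq ?_⟩
  push_cast
  field_simp

variable [MeasurableSpace X] [BorelSpace X]

lemma hausdorffMeasure_closedBall_eq_zero (h : AssouadBound X s C) (hC : 0 ≤ C)
    (hs : 0 ≤ s) {d : ℝ} (hsd : s < d) (x : X) {β : ℝ≥0} (hβ : 0 < β) :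
    μH[d] (closedBall x β) = 0 := by
  have hd : 0 ≤ d := hs.trans hsd.le
  set ε : ℕ → ℝ≥0 := fun k => β / (k + 1)
  set bound : ℕ → ℝ := fun k => C * ((k : ℝ) + 1) ^ s * (2 * β / (k + 1)) ^ d
  choose N hN hNcard using h.exists_finset_isCover_card_le_rpow hβ x
  have hsum : ∀ k, ∑ i : N k, ediam (closedBall (i : X) (ε k)) ^ d ≤ ENNReal.ofReal (bound k) :=
    fun k => calc
      _ ≤ ∑ _i : N k, (2 * (ε k : ℝ≥0∞)) ^ d := by
          gcongr with i
          exact ediam_closedBall_coe_le _ _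
      _ = (N k).card * ENNReal.ofReal ((2 * β / (k + 1)) ^ d) := by
          rw [Finset.sum_const, Finset.card_univ, Fintype.card_coe, nsmul_eq_mul,
            ← ENNReal.ofReal_rpow_of_nonneg (by positivity) hd]
          congr
          rw [mul_div_assoc, ENNReal.ofReal_mul zero_le_two, ENNReal.ofReal_ofNat,
            ← ENNReal.ofReal_coe_nnreal]
          rfl
      _ ≤ ENNReal.ofReal (bound k) := by
          rw [ENNReal.ofReal_mul (by positivity), ← ENNReal.ofReal_natCast]
          gcongr
          exact hNcard k
  have hbound : Tendsto bound atTop (𝓝 0) := by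
    have hk : Tendsto (fun k : ℕ => (k : ℝ) + 1) atTop atTop :=
      tendsto_atTop_add_const_right _ 1 tendsto_natCast_atTop_atTop
    have hrw : ∀ k : ℕ, bound k = C * (2 * β) ^ d * ((k : ℝ) + 1) ^ (-(d - s)) := fun k => by
      have hk0 : (0 : ℝ) < k + 1 := by positivity
      simp only [bound]
      rw [Real.div_rpow (by positivity) hk0.le, neg_sub, Real.rpow_sub hk0]
      ring
    simpa [funext hrw] using ((tendsto_rpow_neg_atTop (sub_pos.mpr hsd)).comp hk).const_mul
      (C * (2 * β) ^ d)
  have hε : Tendsto (fun k => 2 * (ε k : ℝ≥0∞)) atTop (𝓝 0) := by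
    have hε : Tendsto ε atTop (𝓝 0) := by
      rw [← NNReal.tendsto_coe]
      simpa [ε] using tendsto_const_nhds.div_atTop
        (tendsto_atTop_add_const_right _ 1 tendsto_natCast_atTop_atTop)
    simpa using ENNReal.Tendsto.const_mul (ENNReal.tendsto_coe.mpr hε)
      (Or.inr ENNReal.ofNat_ne_top)
  refine le_antisymm ?_ bot_le
  calc μH[d] (closedBall x β)
      ≤ liminf (fun k => ∑ i : N k, ediam (closedBall (i : X) (ε k)) ^ d) atTop :=
        Measure.hausdorffMeasure_le_liminf_sum d _ _ hε _
          (.of_forall fun k i => ediam_closedBall_coe_le _ _)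
          (.of_forall fun k => by simpa [iUnion_subtype, ε] using (hN k).subset_iUnion_closedBall)
    _ ≤ liminf (fun k => ENNReal.ofReal (bound k)) atTop := liminf_le_liminf (.of_forall hsum)
    _ = 0 := by simpa using (ENNReal.tendsto_ofReal hbound).liminf_eq

lemma hausdorffMeasure_univ_eq_zero (h : AssouadBound X s C) (hC : 0 ≤ C)
    (hs : 0 ≤ s) {d : ℝ} (hsd : s < d) : μH[d] (univ : Set X) = 0 := by
  rcases isEmpty_or_nonempty X with hX | ⟨⟨x₀⟩⟩
  · simp [univ_eq_empty_iff.mpr hX]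
  have hcover : (univ : Set X) = ⋃ m : ℕ, closedBall x₀ ((m : ℝ≥0) + 1) := by
    refine (eq_univ_of_forall fun y => mem_iUnion.mpr ?_).symm
    obtain ⟨m, hm⟩ := exists_nat_ge (dist y x₀)
    exact ⟨m, mem_closedBall.mpr (by push_cast; linarith)⟩
  rw [hcover]
  exact measure_iUnion_null fun m =>
    h.hausdorffMeasure_closedBall_eq_zero hC hs hsd x₀ (add_pos_of_nonneg_of_pos zero_le one_pos)

end AssouadBound

end Assouad

section SliceWeight

variable {X : Type*} [PseudoMetricSpace X] (f : X → ℝ) (d : ℝ) {t : Set X}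

open Classical in
/-- Eilenberg's weight: a 1-Lipschitz `f` maps `t` into an interval of length `2 diam t`, and
spreading `ediam t ^ d` over that interval turns a cover of `s` into covers of the level sets of
`f` on `s` whose costs integrate to at most twice the `(d + 1)`-cost of the cover. -/
noncomputable def sliceWeight (t : Set X) : ℝ → ℝ≥0∞ :=
  if h : t.Nonempty then (closedBall (f h.some) (diam t)).indicator fun _ => ediam t ^ d else 0

lemma measurable_sliceWeight : Measurable (sliceWeight f d t) := by
  unfold sliceWeight
  split_ifs
  exacts [measurable_const.indicator measurableSet_closedBall, measurable_const]

lemma lintegral_sliceWeight_le (ht : ediam t ≠ ⊤) :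
    ∫⁻ r, sliceWeight f d t r ≤ 2 * ⨆ _ : t.Nonempty, ediam t ^ (d + 1) := by
  unfold sliceWeight
  split_ifs with hne
  · rw [lintegral_indicator_const measurableSet_closedBall, Real.volume_closedBall, iSup_pos hne]
    rcases eq_or_ne (ediam t) 0 with h0 | h0
    · simp [h0, diam]
    · rw [ENNReal.ofReal_mul zero_le_two, diam, ENNReal.ofReal_toReal ht,
        ENNReal.rpow_add _ _ h0 ht, ENNReal.rpow_one, ENNReal.ofReal_ofNat, mul_left_comm]
  · simp

lemma le_sliceWeight {f : X → ℝ} (hf : LipschitzWith 1 f) (ht : ediam t ≠ ⊤) {r : ℝ}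
    (hr : (t ∩ f ⁻¹' {r}).Nonempty) : ediam t ^ d ≤ sliceWeight f d t r := by
  obtain ⟨y, hyt, hyr⟩ := hr
  have hne : t.Nonempty := ⟨y, hyt⟩
  have hr_mem : r ∈ closedBall (f hne.some) (diam t) := by
    rw [← hyr, mem_closedBall]
    calc dist (f y) (f hne.some) ≤ dist y hne.some := by simpa using hf.dist_le_mul y hne.some
      _ ≤ diam t := dist_le_diam_of_mem' ht hyt hne.some_mem
  simp [sliceWeight, hne, hr_mem]

lemma lintegral_tsum_sliceWeight_le {t : ℕ → Set X} (ht : ∀ n, ediam (t n) ≠ ⊤) :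
    ∫⁻ r, ∑' n, sliceWeight f d (t n) r ≤ 2 * ∑' n, ⨆ _ : (t n).Nonempty, ediam (t n) ^ (d + 1) :=
  calc ∫⁻ r, ∑' n, sliceWeight f d (t n) r = ∑' n, ∫⁻ r, sliceWeight f d (t n) r :=
        lintegral_tsum fun _ => (measurable_sliceWeight f d).aemeasurable
    _ ≤ ∑' n, 2 * ⨆ _ : (t n).Nonempty, ediam (t n) ^ (d + 1) :=
        ENNReal.tsum_le_tsum fun n => lintegral_sliceWeight_le f d (ht n)
    _ = _ := ENNReal.tsum_mul_left

end SliceWeight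

section Slicing

variable {X : Type*} [MetricSpace X] [MeasurableSpace X] [BorelSpace X]

lemma exists_cover_tsum_lt_of_hausdorffMeasure_eq_zero {d : ℝ} {s : Set X} (hs : μH[d] s = 0)
    {δ ε : ℝ≥0∞} (hδ : 0 < δ) (hε : 0 < ε) :
    ∃ t : ℕ → Set X, s ⊆ ⋃ n, t n ∧ (∀ n, ediam (t n) ≤ δ) ∧
      ∑' n, ⨆ _ : (t n).Nonempty, ediam (t n) ^ d < ε := by
  rw [Measure.hausdorffMeasure_apply] at hs
  have h0 : ⨅ (t : ℕ → Set X) (_ : s ⊆ ⋃ n, t n) (_ : ∀ n, ediam (t n) ≤ δ),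
      ∑' n, ⨆ _ : (t n).Nonempty, ediam (t n) ^ d = 0 :=
    le_antisymm (hs ▸ le_iSup₂_of_le δ hδ le_rfl) bot_le
  simpa only [iInf_lt_iff, exists_prop] using lt_of_eq_of_lt h0 hε

lemma hausdorffMeasure_inter_preimage_le_liminf {f : X → ℝ} (hf : LipschitzWith 1 f) (d : ℝ)
    {s : Set X} {t : ℕ → ℕ → Set X} {δ : ℕ → ℝ≥0∞} (hδ : Tendsto δ atTop (𝓝 0))
    (hst : ∀ k, s ⊆ ⋃ n, t k n) (htδ : ∀ k n, ediam (t k n) ≤ δ k)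
    (htop : ∀ k n, ediam (t k n) ≠ ⊤) (r : ℝ) :
    μH[d] (s ∩ f ⁻¹' {r}) ≤ liminf (fun k => ∑' n, sliceWeight f d (t k n) r) atTop := by
  set hits : ℕ → Set ℕ := fun k => {n | (t k n ∩ f ⁻¹' {r}).Nonempty}
  calc μH[d] (s ∩ f ⁻¹' {r})
      ≤ liminf (fun k => ∑' n : hits k, ediam (t k n) ^ d) atTop :=
        Measure.hausdorffMeasure_le_liminf_tsum (ι := fun k => hits k) d _ δ hδ (fun k n => t k n)
          (.of_forall fun k n => htδ k n) (.of_forall fun k y (hy : y ∈ s ∩ f ⁻¹' {r}) => by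
            obtain ⟨n, hn⟩ := mem_iUnion.mp (hst k hy.1)
            exact mem_iUnion.mpr ⟨⟨n, y, hn, hy.2⟩, hn⟩)
    _ ≤ liminf (fun k => ∑' n, sliceWeight f d (t k n) r) atTop := by
        refine liminf_le_liminf (.of_forall fun k => ?_)
        rw [tsum_subtype (hits k) fun n => ediam (t k n) ^ d]
        exact ENNReal.tsum_le_tsum (indicator_le fun n hn => le_sliceWeight d hf (htop k n) hn)

theorem ae_hausdorffMeasure_inter_preimage_eq_zero {f : X → ℝ} (hf : LipschitzWith 1 f)
    {s : Set X} {d : ℝ} (hs : μH[d + 1] s = 0) : ∀ᵐ r, μH[d] (s ∩ f ⁻¹' {r}) = 0 := by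
  set δ : ℕ → ℝ≥0∞ := fun k => ((k + 1 : ℕ) : ℝ≥0∞)⁻¹
  have hδ : Tendsto δ atTop (𝓝 0) :=
    ENNReal.tendsto_inv_nat_nhds_zero.comp (tendsto_add_atTop_nat 1)
  have hδpos : ∀ k, 0 < δ k := fun k => ENNReal.inv_pos.mpr (ENNReal.natCast_ne_top _)
  choose t hst htδ htsum using fun k =>
    exists_cover_tsum_lt_of_hausdorffMeasure_eq_zero hs (hδpos k) (hδpos k)
  have htop : ∀ k n, ediam (t k n) ≠ ⊤ := fun k n =>
    ne_top_of_le_ne_top (ENNReal.inv_ne_top.mpr (by simp)) (htδ k n)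
  set F : ℕ → ℝ → ℝ≥0∞ := fun k r => ∑' n, sliceWeight f d (t k n) r
  have hF : ∀ k, Measurable (F k) := fun k => .tsum fun n => measurable_sliceWeight f d
  have hliminf : ∀ᵐ r, liminf (fun k => F k r) atTop = 0 := by
    refine (lintegral_eq_zero_iff (.liminf hF)).mp (le_antisymm ?_ bot_le)
    calc ∫⁻ r, liminf (fun k => F k r) atTop ≤ liminf (fun k => ∫⁻ r, F k r) atTop :=
          lintegral_liminf_le hF
      _ ≤ liminf (fun k => 2 * δ k) atTop :=
          liminf_le_liminf <| .of_forall fun k =>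
            (lintegral_tsum_sliceWeight_le f d (htop k)).trans (mul_le_mul_right (htsum k).le 2)
      _ = 0 := by
          simpa using (ENNReal.Tendsto.const_mul hδ (Or.inr ENNReal.ofNat_ne_top)).liminf_eq
  filter_upwards [hliminf] with r hr
  exact le_antisymm
    ((hausdorffMeasure_inter_preimage_le_liminf hf d hδ hst htδ htop r).trans_eq hr) bot_le

end Slicing

section ExtendOpen

variable {X : Type*} [PseudoEMetricSpace X] {Z : Set X}

def extendOpen (W : Set Z) : Set X :=
  {x | infEDist x ((↑) '' W) < infEDist x ((↑) '' Wᶜ)}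

lemma isOpen_extendOpen (W : Set Z) : IsOpen (extendOpen W) :=
  isOpen_lt continuous_infEDist continuous_infEDist

lemma image_subset_extendOpen {W : Set Z} (hW : IsOpen W) : (↑) '' W ⊆ extendOpen W := by
  rintro _ ⟨w, hw, rfl⟩
  obtain ⟨ε, hε, hball⟩ := EMetric.isOpen_iff.mp hW w hw
  have hfar : ε ≤ infEDist (w : X) ((↑) '' Wᶜ) := by
    refine le_infEDist.mpr ?_
    rintro _ ⟨z, hz, rfl⟩
    by_contra! hlt
    exact hz (hball (mem_eball'.mpr hlt))
  show infEDist (w : X) _ < _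
  rw [infEDist_zero_of_mem (mem_image_of_mem _ hw)]
  exact hε.trans_le hfar

lemma exists_mem_of_forall_mem_extendOpen {ι : Type*} {W : ι → Set Z} {T : Set ι}
    (hT : T.Finite) (hTne : T.Nonempty) {x : X} (hx : ∀ i ∈ T, x ∈ extendOpen (W i)) :
    ∃ z : Z, ∀ i ∈ T, z ∈ W i := by
  have : Nonempty X := ⟨x⟩
  choose! y hyW hy using fun i hi => infEDist_lt_iff.mp (hx i hi)
  -- The witness nearest to `x` lies in every `W i`.
  obtain ⟨i₀, hi₀, hmin⟩ := exists_min_image T (fun i => edist x (y i)) hT hTne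
  obtain ⟨z, hz, hzy⟩ := hyW i₀ hi₀
  refine ⟨z, fun i hi => ?_⟩
  by_contra hzi
  have hle : infEDist x ((↑) '' (W i)ᶜ) ≤ edist x (y i₀) :=
    hzy ▸ infEDist_le_edist_of_mem (mem_image_of_mem _ hzi)
  exact (hle.trans (hmin i hi)).not_gt (hy i hi)

lemma encard_setOf_mem_extendOpen_le {κ : Type*} {W : κ → Set Z} {m : ℕ}
    (hW : ∀ z, {k | z ∈ W k}.encard ≤ m) (x : X) : {k | x ∈ extendOpen (W k)}.encard ≤ m := by
  refine encard_le_coe_of_forall_finite_subset fun T hTx hT => ?_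
  rcases T.eq_empty_or_nonempty with rfl | hTne
  · simp
  obtain ⟨z, hz⟩ := exists_mem_of_forall_mem_extendOpen hT hTne hTx
  exact (encard_le_encard hz).trans (hW z)

end ExtendOpen

section BallCover

variable {X : Type*} [PseudoMetricSpace X]

lemma exists_seq_ball_cover [SecondCountableTopology X] [Nonempty X] {ι : Type*}
    {U : ι → Set X} (hU : ∀ i, IsOpen (U i)) (hcov : ⋃ i, U i = univ) {P : X → ℝ → Prop}
    (hP : ∀ x, ∀ᵐ r, P x r) :
    ∃ (c : ℕ → X) (r : ℕ → ℝ), (∀ j, P (c j) (r j) ∧ ∃ i, ball (c j) (r j) ⊆ U i) ∧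
      ⋃ j, ball (c j) (r j) = univ := by
  obtain ⟨u, hu⟩ := TopologicalSpace.exists_dense_seq X
  have hrad : ∀ p : ℕ × ℕ, ∃ ρ ∈ Icc (1 / (p.2 + 1 : ℝ)) (2 / (p.2 + 1)), P (u p.1) ρ :=
    fun p => Measure.exists_mem_of_measure_ne_zero_of_ae
      (by rw [Real.volume_Icc, ne_eq, ENNReal.ofReal_eq_zero, not_le, sub_pos]; gcongr; norm_num)
      (ae_restrict_of_ae (hP (u p.1)))
  choose ρ hρ hPρ using hrad
  set S : Set (ℕ × ℕ) := {p | ∃ i, ball (u p.1) (2 / (p.2 + 1)) ⊆ U i}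
  have hS : ∀ y, ∃ p ∈ S, y ∈ ball (u p.1) (1 / (p.2 + 1)) := by
    intro y
    obtain ⟨i, hi⟩ := mem_iUnion.mp (hcov ▸ mem_univ y)
    obtain ⟨ε, hε, hball⟩ := isOpen_iff.mp (hU i) y hi
    obtain ⟨m, hm⟩ := exists_nat_one_div_lt (by positivity : 0 < ε / 3)
    obtain ⟨k, hk⟩ := denseRange_iff.mp hu y (1 / (m + 1)) (by positivity)
    refine ⟨(k, m), ⟨i, (ball_subset_ball' ?_).trans hball⟩, mem_ball.mpr hk⟩
    show 2 / ((m : ℝ) + 1) + dist (u k) y ≤ ε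
    rw [dist_comm, div_eq_mul_one_div]
    linarith
  obtain ⟨e, he⟩ := S.to_countable.exists_eq_range
    (let ⟨p, hp, _⟩ := hS (Classical.arbitrary X); ⟨p, hp⟩)
  refine ⟨fun j => u (e j).1, fun j => ρ (e j), fun j => ⟨hPρ _, ?_⟩, ?_⟩
  · obtain ⟨i, hi⟩ : e j ∈ S := he ▸ mem_range_self j
    exact ⟨i, (ball_subset_ball (hρ _).2).trans hi⟩
  · refine eq_univ_of_forall fun y => ?_
    obtain ⟨p, hpS, hy⟩ := hS y
    obtain ⟨j, rfl⟩ := he ▸ hpS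
    exact mem_iUnion.mpr ⟨j, ball_subset_ball (hρ _).1 hy⟩

lemma exists_pairwise_disjoint_open_subset_ball (c : ℕ → X) (r : ℕ → ℝ)
    (hcov : ⋃ j, ball (c j) (r j) = univ) :
    ∃ O : ℕ → Set X, (∀ j, IsOpen (O j)) ∧ (∀ j, O j ⊆ ball (c j) (r j)) ∧
      Pairwise (Disjoint on O) ∧ (⋃ j, sphere (c j) (r j))ᶜ ⊆ ⋃ j, O j := by
  refine ⟨fun j => ball (c j) (r j) \ ⋃ i ∈ Iio j, closedBall (c i) (r i),
    fun j => isOpen_ball.sdiff ((finite_Iio j).isClosed_biUnion fun _ _ => isClosed_closedBall),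
    fun j => sdiff_subset, ?_, fun y hy => ?_⟩
  · refine pairwise_disjoint_on _ |>.mpr fun i j hij => disjoint_left.mpr fun y hyi hyj => ?_
    exact hyj.2 (mem_biUnion hij (ball_subset_closedBall hyi.1))
  · classical
    have hex : ∃ j, y ∈ closedBall (c j) (r j) :=
      (mem_iUnion.mp (hcov ▸ mem_univ y)).imp fun _ => (ball_subset_closedBall ·)
    refine mem_iUnion.mpr ⟨Nat.find hex, ?_, ?_⟩
    · have hle := mem_closedBall.mp (Nat.find_spec hex)
      exact mem_ball.mpr (hle.lt_of_ne fun heq => hy (mem_iUnion.mpr ⟨_, mem_sphere.mpr heq⟩))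
    · simp only [mem_iUnion, mem_Iio, not_exists]
      exact fun i hi => Nat.find_min hex hi

end BallCover

section Refinement

def CoverMultiplicityLE (X : Type*) [TopologicalSpace X] (m : ℕ) : Prop :=
  ∀ (ι : Type) (U : ι → Set X), (∀ i, IsOpen (U i)) → (⋃ i, U i) = univ →
    ∃ (κ : Type) (V : κ → Set X), (∀ k, IsOpen (V k)) ∧ (⋃ k, V k) = univ ∧
      (∀ k, ∃ i, V k ⊆ U i) ∧ ∀ x : X, {k | x ∈ V k}.encard ≤ m

lemma CoverMultiplicityLE.covDimLE {X : Type*} [TopologicalSpace X] {n : ℕ}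
    (h : CoverMultiplicityLE X (n + 1)) : CovDimLE X n := fun ι U hU hcov =>
  let ⟨κ, V, hVopen, hVcov, hVsub, hVmult⟩ := h ι U hU hcov
  ⟨κ, V, hVopen, hVcov, hVsub, fun x => encard_le_coe_iff_finite_ncard_le.mp (hVmult x)⟩

lemma coverMultiplicityLE_of_isEmpty (X : Type*) [TopologicalSpace X] [IsEmpty X] (m : ℕ) :
    CoverMultiplicityLE X m :=
  fun ι U hU hcov => ⟨ι, U, hU, hcov, fun i => ⟨i, subset_rfl⟩, isEmptyElim⟩

lemma encard_setOf_mem_sumElim_le {X ι κ : Type*} {O : ι → Set X} (hO : Pairwise (Disjoint on O))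
    {V : κ → Set X} {x : X} {m : ℕ} (hV : {k | x ∈ V k}.encard ≤ m) :
    {a | x ∈ Sum.elim O V a}.encard ≤ (m + 1 : ℕ) := by
  have hO : {i | x ∈ O i}.encard ≤ 1 := encard_le_one_iff.mpr fun i j hi hj => by
    by_contra hij
    exact disjoint_left.mp (hO hij) hi hj
  have hsplit : {a | x ∈ Sum.elim O V a} = Sum.inl '' {i | x ∈ O i} ∪ Sum.inr '' {k | x ∈ V k} := by
    ext (i | k) <;> simp
  calc {a | x ∈ Sum.elim O V a}.encard
      ≤ (Sum.inl '' {i | x ∈ O i}).encard + (Sum.inr '' {k | x ∈ V k}).encard :=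
        hsplit ▸ encard_union_le _ _
    _ ≤ 1 + m := by
        rw [Sum.inl_injective.encard_image, Sum.inr_injective.encard_image]
        gcongr
    _ = (m + 1 : ℕ) := by push_cast; ring

variable {X : Type*} [MetricSpace X] [MeasurableSpace X] [BorelSpace X]

lemma coverMultiplicityLE_succ [SecondCountableTopology X] {n : ℕ}
    (hX : μH[n + 1] (univ : Set X) = 0)
    (ih : ∀ Z : Set X, μH[n] Z = 0 → CoverMultiplicityLE Z n) :
    CoverMultiplicityLE X (n + 1) := by
  rcases isEmpty_or_nonempty X with hempty | hne
  · exact coverMultiplicityLE_of_isEmpty X _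
  intro ι U hU hcov
  have hsphere : ∀ x, ∀ᵐ r, μH[n] (sphere x r) = 0 := fun x =>
    (ae_hausdorffMeasure_inter_preimage_eq_zero (LipschitzWith.dist_left x) hX).mono
      fun r hr => by rwa [univ_inter] at hr
  obtain ⟨c, r, hcr, hcover⟩ := exists_seq_ball_cover hU hcov hsphere
  choose hnull i hi using hcr
  obtain ⟨O, hOopen, hOball, hOdisj, hOcov⟩ := exists_pairwise_disjoint_open_subset_ball c r hcover
  set Z := ⋃ j, sphere (c j) (r j)
  obtain ⟨κ, W, hWopen, hWcov, hWsub, hWmult⟩ := ih Z (measure_iUnion_null hnull) ι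
    (fun i => (↑) ⁻¹' U i) (fun i => (hU i).preimage continuous_subtype_val)
    (by rw [← preimage_iUnion, hcov]; rfl)
  choose τ hτ using hWsub
  set V : κ → Set X := fun k => extendOpen (W k) ∩ U (τ k)
  refine ⟨ℕ ⊕ κ, Sum.elim O V, ?_, ?_, ?_, fun x => ?_⟩
  · rintro (j | k)
    exacts [hOopen j, (isOpen_extendOpen _).inter (hU _)]
  · refine eq_univ_of_forall fun x => mem_iUnion.mpr ?_
    by_cases hx : x ∈ Z
    · obtain ⟨k, hk⟩ := mem_iUnion.mp (hWcov ▸ mem_univ (⟨x, hx⟩ : Z))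
      exact ⟨.inr k, image_subset_extendOpen (hWopen k) ⟨_, hk, rfl⟩, hτ k hk⟩
    · obtain ⟨j, hj⟩ := mem_iUnion.mp (hOcov hx)
      exact ⟨.inl j, hj⟩
  · rintro (j | k)
    exacts [⟨i j, (hOball j).trans (hi j)⟩, ⟨τ k, inter_subset_right⟩]
  · exact encard_setOf_mem_sumElim_le hOdisj
      ((encard_le_encard fun k hk => hk.1).trans (encard_setOf_mem_extendOpen_le hWmult x))

universe u

theorem coverMultiplicityLE_of_hausdorffMeasure_eq_zero (n : ℕ) :
    ∀ (X : Type u) [MetricSpace X] [SecondCountableTopology X] [MeasurableSpace X]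
      [BorelSpace X], μH[n] (univ : Set X) = 0 → CoverMultiplicityLE X n := by
  induction n with
  | zero =>
    intro X _ _ _ _ hX
    rw [Nat.cast_zero] at hX
    have : IsEmpty X := not_nonempty_iff.mp fun ⟨x⟩ => by
      simpa [hX] using Measure.one_le_hausdorffMeasure_zero_of_nonempty (univ_nonempty (α := X))
    exact coverMultiplicityLE_of_isEmpty X 0
  | succ n ih =>
    intro X _ _ _ _ hX
    refine coverMultiplicityLE_succ (by exact_mod_cast hX) fun Z hZ => ih Z ?_
    rwa [← isometry_subtype_coe.hausdorffMeasure_image (Or.inl n.cast_nonneg), image_univ,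
      Subtype.range_coe]

end Refinement

/-- If a metric space `X` has topological (covering) dimension `n` and finite Assouad
dimension, then `n ≤ dim_A(X)`. -/
theorem covDim_le_assouadDim {X : Type*} [MetricSpace X] (n : ℕ)
    (hdim : CovDimLE X n ∧ ∀ m : ℕ, m < n → ¬ CovDimLE X m)
    (hfin : (AssouadExponents X).Nonempty) :
    (n : ℝ) ≤ sInf (AssouadExponents X) := by
  refine le_csInf hfin fun s ⟨hs, C, hC, hbound⟩ => ?_
  replace hbound : AssouadBound X s C := hbound
  by_contra! hsn
  have hn : 0 < n := by exact_mod_cast hs.trans_lt hsn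
  obtain ⟨m, rfl⟩ := Nat.exists_eq_succ_of_ne_zero hn.ne'
  let : MeasurableSpace X := borel X
  have : BorelSpace X := ⟨rfl⟩
  have := hbound.secondCountableTopology
  exact hdim.2 m m.lt_succ_self (coverMultiplicityLE_of_hausdorffMeasure_eq_zero (m + 1) X
    (hbound.hausdorffMeasure_univ_eq_zero hC hs hsn)).covDimLE
end
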